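/- Let n be a positive integer, B a symmetric n×n real matrix, g ∈ ℝⁿ, and δ > 0. Suppose p* ∈ ℝⁿ and σ* ≥ 0 satisfy ‖p*‖₂ ≤ δ, (B + σ*I)p* = -g, σ*(δ - ‖p*‖₂) = 0, and additionally B + σ*I is positive definite. Then p* is the unique global minimizer of q(p) = gᵀp + (1/2)pᵀBp over {p ∈ ℝⁿ : ‖p‖₂ ≤ δ}: any p with ‖p‖₂ ≤ δ and p ≠ p* satisfies q(p) > q(p*). -/

import Mathlib

/-!
Write `M = B + σ⋆I`. Eliminating `g = -M p⋆` and `B = M - σ⋆I` gives, for every `p`,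
`q(p) - q(p⋆) = ½ (p - p⋆)ᵀ M (p - p⋆) + ½ σ⋆ (‖p⋆‖² - ‖p‖²)`.
The first term is positive for `p ≠ p⋆` since `M` is positive definite; the second is
nonnegative for feasible `p`, because complementarity forces `σ⋆ = 0` or `‖p⋆‖ = δ ≥ ‖p‖`.
-/

open Matrix

section QuadraticModel

variable {ι : Type*} [Fintype ι]

lemma Matrix.IsSymm.dotProduct_mulVec_comm {R : Type*} [CommSemiring R] {M : Matrix ι ι R}
    (hM : M.IsSymm) (x y : ι → R) : x ⬝ᵥ M *ᵥ y = y ⬝ᵥ M *ᵥ x := by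
  rw [dotProduct_mulVec, ← mulVec_transpose, hM.eq, dotProduct_comm]

noncomputable def quadModel (g : ι → ℝ) (B : Matrix ι ι ℝ) (p : ι → ℝ) : ℝ :=
  g ⬝ᵥ p + (1 / 2) * (p ⬝ᵥ B *ᵥ p)

lemma quadModel_sub_quadModel [DecidableEq ι] {B : Matrix ι ι ℝ} {σ : ℝ} {g y : ι → ℝ}
    (hsymm : (B + σ • 1).IsSymm) (hy : (B + σ • 1) *ᵥ y = -g) (x : ι → ℝ) :
    quadModel g B x - quadModel g B y =
      (1 / 2) * ((x - y) ⬝ᵥ (B + σ • 1) *ᵥ (x - y)) + σ / 2 * (y ⬝ᵥ y - x ⬝ᵥ x) := by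
  have hg (z : ι → ℝ) : g ⬝ᵥ z = -(z ⬝ᵥ (B + σ • 1) *ᵥ y) := by
    rw [hy, dotProduct_neg, dotProduct_comm, neg_neg]
  have hB (z : ι → ℝ) : z ⬝ᵥ B *ᵥ z = z ⬝ᵥ (B + σ • 1) *ᵥ z - σ * (z ⬝ᵥ z) := by
    rw [add_mulVec, smul_mulVec, one_mulVec, dotProduct_add, dotProduct_smul, smul_eq_mul,
      add_sub_cancel_right]
  rw [quadModel, quadModel, hg, hg, hB, hB, mulVec_sub, dotProduct_sub, sub_dotProduct,
    sub_dotProduct, hsymm.dotProduct_mulVec_comm y x]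
  ring

end QuadraticModel

lemma EuclideanSpace.ofLp_dotProduct_self {ι : Type*} [Fintype ι] (x : EuclideanSpace ℝ ι) :
    WithLp.ofLp x ⬝ᵥ WithLp.ofLp x = ‖x‖ ^ 2 := by
  rw [← real_inner_self_eq_norm_sq, EuclideanSpace.inner_eq_star_dotProduct, star_trivial]

lemma mul_sq_sub_sq_nonneg_of_complementary {σ δ a b : ℝ} (hσ : 0 ≤ σ)
    (hcomp : σ * (δ - a) = 0) (hb : 0 ≤ b) (hbδ : b ≤ δ) : 0 ≤ σ * (a ^ 2 - b ^ 2) := by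
  rcases mul_eq_zero.1 hcomp with rfl | hδa
  · simp
  · obtain rfl : a = δ := by linarith
    have := pow_le_pow_left₀ hb hbδ 2
    exact mul_nonneg hσ (by linarith)

theorem mss_stmt3_general (n : ℕ)
    (B : Matrix (Fin n) (Fin n) ℝ)
    (g : EuclideanSpace ℝ (Fin n)) (δ : ℝ)
    (pstar : EuclideanSpace ℝ (Fin n)) (σ : ℝ) (hσ : 0 ≤ σ)
    (heq : (B + σ • 1).mulVec pstar = -g)
    (hcomp : σ * (δ - ‖pstar‖) = 0)
    (hpd : (B + σ • 1).PosDef) :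
    ∀ p : EuclideanSpace ℝ (Fin n), ‖p‖ ≤ δ → p ≠ pstar →
      g ⬝ᵥ pstar + (1 / 2) * (pstar ⬝ᵥ B.mulVec pstar) <
        g ⬝ᵥ p + (1 / 2) * (p ⬝ᵥ B.mulVec p) := by
  intro p hp hne
  change quadModel g B pstar < quadModel g B p
  have hcurv := hpd.dotProduct_mulVec_pos (sub_ne_zero.2 ((WithLp.ofLp_injective 2).ne hne))
  rw [star_trivial] at hcurv
  have hdiff := quadModel_sub_quadModel (isHermitian_iff_isSymm.1 hpd.isHermitian) heq p
  rw [EuclideanSpace.ofLp_dotProduct_self, EuclideanSpace.ofLp_dotProduct_self] at hdiff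
  have hcompl := mul_sq_sub_sq_nonneg_of_complementary hσ hcomp (norm_nonneg p) hp
  linarith

/-- If `p⋆` and `σ⋆ ≥ 0` satisfy the Moré–Sorensen optimality conditions and
moreover `B + σ⋆I` is positive definite, then `p⋆` is the unique global
minimizer of `q(p) = gᵀp + (1/2)pᵀBp` over `{p : ‖p‖₂ ≤ δ}`: every feasible
`p ≠ p⋆` satisfies `q(p) > q(p⋆)`. -/
theorem mss_stmt3 (n : ℕ) (hn : 0 < n)
    (B : Matrix (Fin n) (Fin n) ℝ) (hB : B.IsSymm)
    (g : EuclideanSpace ℝ (Fin n)) (δ : ℝ) (hδ : 0 < δ)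
    (pstar : EuclideanSpace ℝ (Fin n)) (σ : ℝ) (hσ : 0 ≤ σ)
    (hfeas : ‖pstar‖ ≤ δ)
    (heq : (B + σ • 1).mulVec pstar = -g)
    (hcomp : σ * (δ - ‖pstar‖) = 0)
    (hpd : (B + σ • 1).PosDef) :
    ∀ p : EuclideanSpace ℝ (Fin n), ‖p‖ ≤ δ → p ≠ pstar →
      g ⬝ᵥ pstar + (1 / 2) * (pstar ⬝ᵥ B.mulVec pstar) <
        g ⬝ᵥ p + (1 / 2) * (p ⬝ᵥ B.mulVec p) :=
  mss_stmt3_general n B g δ pstar σ hσ heq hcomp hpd
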